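/- arXiv:1909.01161 — 2 statements merged into one kernel-verified Lean document; each statement's English description precedes it below -/
import Mathlib

section
/- If d-DNNF conditions hold recursively, model counting is linear-time: define a function c on NNF nodes by c(x) = c(¬x) = 1, c(True) = 1, c(False) = 0 over a single variable, c(∧(F,G)) = c(F)·c(G) when F and G are over disjoint variable sets, and c(∨(F,G)) = c(F) + c(G) when F and G are over the same variable set and mutually inconsistent; then c(F) equals the number of models of F over its variable set. -/
/-- Negation normal form formulas: literals, constants, binary ∧ and ∨. -/
inductive NNF (V : Type) where
  | lit (x : V) (pol : Bool)
  | tru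
  | fls
  | and (F G : NNF V)
  | or (F G : NNF V)

namespace NNF

variable {V : Type} [DecidableEq V]

/-- Evaluation of an NNF formula under an assignment. -/
def eval (τ : V → Bool) : NNF V → Bool
  | lit x pol => τ x == pol
  | tru => true
  | fls => false
  | and F G => F.eval τ && G.eval τ
  | or F G => F.eval τ || G.eval τ

/-- The set of variables mentioned by an NNF formula. -/
def vars : NNF V → Finset V
  | lit x _ => {x}
  | tru => ∅
  | fls => ∅
  | and F G => F.vars ∪ G.vars
  | or F G => F.vars ∪ G.vars

/-- The linear-time d-DNNF model counting recursion. -/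
def count : NNF V → ℕ
  | lit _ _ => 1
  | tru => 1
  | fls => 0
  | and F G => F.count * G.count
  | or F G => F.count + G.count

/-- Decomposability of every ∧ and determinism of every ∨, recursively:
∧-children are over disjoint variable sets, ∨-children are over the same
variable set and mutually inconsistent. -/
def ddnnf : NNF V → Prop
  | lit _ _ => True
  | tru => True
  | fls => True
  | and F G => ddnnf F ∧ ddnnf G ∧ Disjoint F.vars G.vars
  | or F G => ddnnf F ∧ ddnnf G ∧ F.vars = G.vars ∧
      ∀ τ : V → Bool, ¬(F.eval τ = true ∧ G.eval τ = true)

/-- Extend an assignment on a finite variable set to all of `V` by `false`. -/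
def ext (S : Finset V) (τ : {x // x ∈ S} → Bool) : V → Bool :=
  fun x => if hx : x ∈ S then τ ⟨x, hx⟩ else false

/-- Evaluation only depends on the values of the assignment on the variables
of the formula. -/
theorem eval_congr {F : NNF V} {τ σ : V → Bool}
    (h : ∀ x ∈ F.vars, τ x = σ x) : F.eval τ = F.eval σ := by
  induction F with
  | lit x pol => simp [eval, h x (by simp [vars])]
  | tru => rfl
  | fls => rfl
  | and F G ihF ihG =>
      simp [eval, ihF (fun x hx => h x (by simp [vars, hx])),
        ihG (fun x hx => h x (by simp [vars, hx]))]
  | or F G ihF ihG =>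
      simp [eval, ihF (fun x hx => h x (by simp [vars, hx])),
        ihG (fun x hx => h x (by simp [vars, hx]))]

/-- For disjoint variable sets, models of a conjunction are in bijection with
pairs of models of the conjuncts. -/
noncomputable def andEquiv (F G : NNF V) (hd : Disjoint F.vars G.vars) :
    {τ : {x // x ∈ F.vars ∪ G.vars} → Bool //
        F.eval (ext _ τ) = true ∧ G.eval (ext _ τ) = true} ≃
      {σ : {x // x ∈ F.vars} → Bool // F.eval (ext _ σ) = true} ×
      {ρ : {x // x ∈ G.vars} → Bool // G.eval (ext _ ρ) = true} where
  toFun τ :=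
    ⟨⟨fun x => τ.1 ⟨x.1, Finset.mem_union_left _ x.2⟩, by
        rw [show F.eval (ext _ fun x => τ.1 ⟨x.1, Finset.mem_union_left _ x.2⟩)
            = F.eval (ext _ τ.1) from eval_congr (fun x hx => by
              simp [ext, hx, Finset.mem_union_left _ hx])]
        exact τ.2.1⟩,
     ⟨fun x => τ.1 ⟨x.1, Finset.mem_union_right _ x.2⟩, by
        rw [show G.eval (ext _ fun x => τ.1 ⟨x.1, Finset.mem_union_right _ x.2⟩)
            = G.eval (ext _ τ.1) from eval_congr (fun x hx => by
              simp [ext, hx, Finset.mem_union_right _ hx])]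
        exact τ.2.2⟩⟩
  invFun p :=
    ⟨fun x => if hx : x.1 ∈ F.vars then p.1.1 ⟨x.1, hx⟩
      else p.2.1 ⟨x.1, (Finset.mem_union.1 x.2).resolve_left hx⟩, by
      constructor
      · rw [show F.eval (ext (F.vars ∪ G.vars) _) = F.eval (ext _ p.1.1) from
          eval_congr (fun x hx => by
            simp [ext, hx, Finset.mem_union_left _ hx])]
        exact p.1.2
      · rw [show G.eval (ext (F.vars ∪ G.vars) _) = G.eval (ext _ p.2.1) from
          eval_congr (fun x hx => by
            have hxF : x ∉ F.vars := Finset.disjoint_right.1 hd hx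
            simp [ext, hx, hxF, Finset.mem_union_right _ hx])]
        exact p.2.2⟩
  left_inv τ := by
    ext x
    dsimp only
    split
    · rfl
    · rfl
  right_inv p := by
    ext x
    · dsimp only
      simp [x.2]
    · dsimp only
      have hxF : x.1 ∉ F.vars := Finset.disjoint_right.1 hd x.2
      simp [hxF]

end NNF

/-- For a d-DNNF formula, the counting recursion computes the number of
models over its variable set. -/
theorem ddnnf_count_correct {V : Type} [DecidableEq V] (F : NNF V)
    (h : F.ddnnf) :
    F.count = Fintype.card {τ : {x // x ∈ F.vars} → Bool //
      F.eval (fun x => if hx : x ∈ F.vars then τ ⟨x, hx⟩ else false) = true} := by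
  induction F with
  | lit x pol =>
      symm
      rw [NNF.count, Fintype.card_eq_one_iff]
      refine ⟨⟨fun _ => pol, by simp [NNF.eval, NNF.vars]⟩, ?_⟩
      rintro ⟨b, hb⟩
      ext ⟨y, hy⟩
      simp only [NNF.vars, Finset.mem_singleton] at hy
      subst hy
      simpa [NNF.eval, NNF.vars] using hb
  | tru =>
      symm
      rw [NNF.count, Fintype.card_eq_one_iff]
      refine ⟨⟨fun _ => false, rfl⟩, ?_⟩
      rintro ⟨b, hb⟩
      ext ⟨y, hy⟩
      exact absurd hy (by simp [NNF.vars])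
  | fls =>
      symm
      rw [NNF.count, Fintype.card_eq_zero_iff]
      exact ⟨fun t => by simpa [NNF.eval] using t.2⟩
  | and F G ihF ihG =>
      obtain ⟨hF, hG, hd⟩ := h
      rw [NNF.count, ihF hF, ihG hG]
      rw [show (F.and G).vars = F.vars ∪ G.vars from rfl]
      rw [Fintype.card_congr ((Equiv.subtypeEquivRight (fun τ => by
        simp only [NNF.eval, Bool.and_eq_true]; exact Iff.rfl)).trans (NNF.andEquiv F G hd))]
      rw [Fintype.card_prod]
      rfl
  | or F G ihF ihG =>
      obtain ⟨hF, hG, hv, hdet⟩ := h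
      rw [NNF.count, ihF hF, ihG hG, hv]
      rw [show (F.or G).vars = F.vars ∪ G.vars from rfl, hv, Finset.union_self]
      have hdisj : Disjoint
          (fun τ : {x // x ∈ G.vars} → Bool => F.eval (NNF.ext G.vars τ) = true)
          (fun τ : {x // x ∈ G.vars} → Bool => G.eval (NNF.ext G.vars τ) = true) :=
        Pi.disjoint_iff.mpr fun τ => by
          rw [disjoint_iff_inf_le]
          intro hpq
          exact absurd ⟨hpq.1, hpq.2⟩ (hdet _)
      have e : {τ : {x // x ∈ G.vars} → Bool // (F.or G).eval (NNF.ext G.vars τ) = true} ≃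
          {τ : {x // x ∈ G.vars} → Bool //
            F.eval (NNF.ext G.vars τ) = true ∨ G.eval (NNF.ext G.vars τ) = true} :=
        Equiv.subtypeEquivRight fun τ => by
          simp only [NNF.eval, Bool.or_eq_true]
      exact ((Fintype.card_congr e).trans
        (Fintype.card_subtype_or_disjoint _ _ hdisj)).symm
end

section
/- A decomposable and deterministic NNF formula F is satisfiable if and only if its model count c(F) (computed by the recursion c(literal)=1, c(∧)=product, c(∨)=sum) is positive. -/
lemma NNF.eval_congr_s10 {V : Type} [DecidableEq V] (F : NNF V) (τ σ : V → Bool)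
    (h : ∀ x ∈ F.vars, τ x = σ x) : F.eval τ = F.eval σ := by
  induction F with
  | lit x pol => simp [NNF.eval, h x (by simp [NNF.vars])]
  | tru => rfl
  | fls => rfl
  | and F G ihF ihG =>
      simp only [NNF.eval]
      rw [ihF (fun x hx => h x (by simp [NNF.vars, hx])),
          ihG (fun x hx => h x (by simp [NNF.vars, hx]))]
  | or F G ihF ihG =>
      simp only [NNF.eval]
      rw [ihF (fun x hx => h x (by simp [NNF.vars, hx])),
          ihG (fun x hx => h x (by simp [NNF.vars, hx]))]

/-- A d-DNNF formula is satisfiable iff its model count, computed by the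
recursion `c(literal)=1, c(∧)=product, c(∨)=sum`, is positive. -/
theorem ddnnf_sat_iff_count_pos {V : Type} [DecidableEq V] (F : NNF V)
    (h : F.ddnnf) :
    (∃ τ : V → Bool, F.eval τ = true) ↔ 0 < F.count := by
  induction F with
  | lit x pol => exact ⟨fun _ => by simp [NNF.count], fun _ => ⟨fun _ => pol, by simp [NNF.eval]⟩⟩
  | tru => exact ⟨fun _ => by simp [NNF.count], fun _ => ⟨fun _ => true, rfl⟩⟩
  | fls => simp [NNF.count, NNF.eval]
  | and F G ihF ihG =>
      obtain ⟨hF, hG, hdisj⟩ := h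
      rw [show (NNF.and F G).count = F.count * G.count from rfl, Nat.pos_iff_ne_zero,
        Ne, Nat.mul_eq_zero]
      push_neg
      rw [← Nat.pos_iff_ne_zero, ← Nat.pos_iff_ne_zero, ← ihF hF, ← ihG hG]
      constructor
      · rintro ⟨τ, hτ⟩
        simp only [NNF.eval, Bool.and_eq_true] at hτ
        exact ⟨⟨τ, hτ.1⟩, ⟨τ, hτ.2⟩⟩
      · rintro ⟨⟨τ1, h1⟩, ⟨τ2, h2⟩⟩
        refine ⟨fun x => if x ∈ F.vars then τ1 x else τ2 x, ?_⟩
        simp only [NNF.eval, Bool.and_eq_true]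
        constructor
        · rw [NNF.eval_congr_s10 F _ τ1 (fun x hx => by simp [hx])]; exact h1
        · rw [NNF.eval_congr_s10 G _ τ2 (fun x hx => by
            simp [Finset.disjoint_right.mp hdisj hx])]
          exact h2
  | or F G ihF ihG =>
      obtain ⟨hF, hG, _, _⟩ := h
      rw [show (NNF.or F G).count = F.count + G.count from rfl, Nat.add_pos_iff_pos_or_pos,
        ← ihF hF, ← ihG hG]
      constructor
      · rintro ⟨τ, hτ⟩
        simp only [NNF.eval, Bool.or_eq_true] at hτ
        exact hτ.imp (fun h => ⟨τ, h⟩) (fun h => ⟨τ, h⟩)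
      · rintro (⟨τ, hτ⟩ | ⟨τ, hτ⟩) <;> exact ⟨τ, by simp [NNF.eval, hτ]⟩
end
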